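/- Let w be a doubling weight on ℝⁿ and ε > 0. Then there exists η > 0, depending only on the doubling constant of w and ε, such that for every radially decreasing nonnegative continuous function f supported in B(0,1+η) with f ≡ 1 on B(0,1), and for all x ∈ ℝⁿ and r > 0, one has 1 ≤ (f_r ∗ w)(x) / (χ_r ∗ w)(x) ≤ 1 + ε, where χ is the indicator of the unit ball and f_r(x) = r⁻ⁿ f(x/r). -/

import Mathlib

open MeasureTheory Metric Set Real Filter
noncomputable section

/-- `w` is a doubling weight on ℝⁿ with doubling constant `C`: it is nonnegative,
locally integrable, nontrivial (every ball has positive mass) and satisfies the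
doubling inequality for the measure `w dx`. -/
def DoublingWeight (n : ℕ) (C : ℝ) (w : EuclideanSpace ℝ (Fin n) → ℝ) : Prop :=
  (∀ x, 0 ≤ w x) ∧ MeasureTheory.LocallyIntegrable w ∧
  (∀ (x : EuclideanSpace ℝ (Fin n)) (r : ℝ), 0 < r → 0 < ∫ y in Metric.ball x r, w y) ∧
  (∀ (x : EuclideanSpace ℝ (Fin n)) (r : ℝ), 0 < r →
    (∫ y in Metric.ball x (2*r), w y) ≤ C * ∫ y in Metric.ball x r, w y)

/-!
Under doubling with constant `D`, the outer half `B(x,r) \ B(x,r-h/2)` of a thin annulus is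
covered by the `16`-fold enlargements of disjoint balls of radius `h/8` centred on the sphere
of radius `r - 3h/4`; these small balls lie in the inner half `B(x,r-h/2) \ B(x,r-h)`, so the
outer half has at most `D⁴` times the mass of the inner half. Hole filling turns this into a
decay factor `θ = D⁴/(D⁴+1) < 1` each time the width is halved, whence
`w(B(x,(1+2⁻ᵐ)s)) ≤ (1 + Dθᵐ) w(B(x,s))` with no dependence on the dimension. The rescaled
profile `f_r(x - ·)` is squeezed between the indicators of `B(x,r)` and `B(x,(1+2⁻ᵐ)r)`.
-/

open scoped ENNReal NNReal

def IsBallDoubling {X : Type*} [PseudoMetricSpace X] [MeasurableSpace X] (μ : Measure X)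
    (D : ℝ≥0) : Prop :=
  ∀ (x : X) (s : ℝ), 0 < s → μ (ball x (2 * s)) ≤ D * μ (ball x s)

def annulusDecayRate (D : ℝ≥0) : ℝ≥0 := D ^ 4 / (D ^ 4 + 1)

theorem annulusDecayRate_lt_one (D : ℝ≥0) : annulusDecayRate D < 1 :=
  (div_lt_one (by positivity)).2 (lt_add_one _)

/-- Widman's hole-filling trick. -/
theorem ENNReal.le_coe_div_add_one_mul_add {a : ℝ≥0} {x y : ℝ≥0∞} (h : x ≤ a * y) :
    x ≤ ((a / (a + 1) : ℝ≥0) : ℝ≥0∞) * (x + y) := by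
  have ha : (a + 1 : ℝ≥0) ≠ 0 := by positivity
  calc x = ((a + 1)⁻¹ * (a + 1) : ℝ≥0) * x := by rw [inv_mul_cancel₀ ha, ENNReal.coe_one, one_mul]
    _ = ((a + 1)⁻¹ : ℝ≥0) * (a * x + x) := by push_cast; ring
    _ ≤ ((a + 1)⁻¹ : ℝ≥0) * (a * x + a * y) := by gcongr
    _ = ((a / (a + 1) : ℝ≥0) : ℝ≥0∞) * (x + y) := by rw [div_eq_inv_mul]; push_cast; ring

theorem exists_ball_subset_inner_annulus {E : Type*} [NormedAddCommGroup E] [NormedSpace ℝ E]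
    {x z : E} {r h : ℝ} (hhr : h ≤ r) (hz : z ∈ ball x r \ ball x (r - h / 2)) :
    ∃ q, dist z q ≤ 3 * h / 4 ∧ ball q (h / 8) ⊆ ball x (r - h / 2) \ ball x (r - h) := by
  obtain ⟨hzr, hzr'⟩ := hz
  rw [mem_ball, dist_comm] at hzr
  rw [mem_ball, not_lt, dist_comm] at hzr'
  set t := (r - 3 * h / 4) / dist x z
  have hρ : 0 < dist x z := by linarith
  have ht0 : 0 ≤ t := div_nonneg (by linarith) hρ.le
  have ht1 : t ≤ 1 := (div_le_one hρ).2 (by linarith)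
  have hqx : dist (AffineMap.lineMap x z t) x = r - 3 * h / 4 := by
    rw [dist_lineMap_left, Real.norm_of_nonneg ht0, div_mul_cancel₀ _ hρ.ne']
  have hqz : dist (AffineMap.lineMap x z t) z = dist x z - (r - 3 * h / 4) := by
    rw [dist_lineMap_right, Real.norm_of_nonneg (by linarith), sub_mul, one_mul,
      div_mul_cancel₀ _ hρ.ne']
  refine ⟨AffineMap.lineMap x z t, by rw [dist_comm]; linarith, fun y hy => ?_⟩
  rw [mem_ball] at hy
  have hyx := dist_triangle y (AffineMap.lineMap x z t) x
  have hqy := dist_triangle (AffineMap.lineMap x z t) y x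
  rw [dist_comm (AffineMap.lineMap x z t) y] at hqy
  exact ⟨mem_ball.2 (by linarith), fun hy' => by rw [mem_ball] at hy'; linarith⟩

namespace IsBallDoubling

section PseudoMetric

variable {X : Type*} [PseudoMetricSpace X] [MeasurableSpace X] {μ : Measure X} {D : ℝ≥0}

theorem measure_ball_two_pow_mul_le (hμ : IsBallDoubling μ D) (k : ℕ) (x : X) {s : ℝ}
    (hs : 0 < s) : μ (ball x (2 ^ k * s)) ≤ ↑(D ^ k) * μ (ball x s) := by
  induction k with
  | zero => simp
  | succ k ih =>
    calc μ (ball x (2 ^ (k + 1) * s)) = μ (ball x (2 * (2 ^ k * s))) := by ring_nf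
      _ ≤ D * μ (ball x (2 ^ k * s)) := hμ x _ (by positivity)
      _ ≤ D * (↑(D ^ k) * μ (ball x s)) := by gcongr
      _ = ↑(D ^ (k + 1)) * μ (ball x s) := by push_cast; ring

end PseudoMetric

variable {E : Type*} [NormedAddCommGroup E] [NormedSpace ℝ E] [TopologicalSpace.SeparableSpace E]
  [MeasurableSpace E] [OpensMeasurableSpace E] {μ : Measure E} {D : ℝ≥0}

theorem measure_outer_annulus_le (hμ : IsBallDoubling μ D) (x : E) {r h : ℝ} (hh : 0 < h)
    (hhr : h ≤ r) :
    μ (ball x r \ ball x (r - h / 2)) ≤ ↑(D ^ 4) * μ (ball x (r - h / 2) \ ball x (r - h)) := by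
  set A := ball x r \ ball x (r - h / 2)
  set H := ball x (r - h / 2) \ ball x (r - h)
  choose! q hqz hqH using fun z (hz : z ∈ A) => exists_ball_subset_inner_annulus hhr hz
  obtain ⟨u, huA, hu_disj, hu_cover⟩ :=
    Vitali.exists_disjoint_subfamily_covering_enlargement_closedBall A q (fun _ => h / 8) (h / 8)
      (fun _ _ => le_rfl) 4 (by norm_num)
  have hu_disj' : u.PairwiseDisjoint fun b => ball (q b) (h / 8) :=
    hu_disj.mono fun _ => ball_subset_closedBall
  have hu : u.Countable :=
    hu_disj'.countable_of_isOpen (fun _ _ => isOpen_ball) fun _ _ => nonempty_ball.2 (by positivity)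
  have hA : A ⊆ ⋃ b ∈ u, ball (q b) (2 ^ 4 * (h / 8)) := by
    intro a ha
    obtain ⟨b, hb, hab⟩ := hu_cover a ha
    have : dist (q a) (q b) ≤ 4 * (h / 8) := hab (mem_closedBall_self (by positivity))
    exact mem_biUnion hb (mem_ball.2 (by linarith [dist_triangle a (q a) (q b), hqz a ha]))
  calc μ A ≤ ∑' b : u, μ (ball (q b) (2 ^ 4 * (h / 8))) :=
        (measure_mono hA).trans (measure_biUnion_le μ hu _)
    _ ≤ ∑' b : u, ↑(D ^ 4) * μ (ball (q b) (h / 8)) :=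
        ENNReal.tsum_le_tsum fun b => hμ.measure_ball_two_pow_mul_le 4 _ (by positivity)
    _ = ↑(D ^ 4) * μ (⋃ b ∈ u, ball (q b) (h / 8)) := by
        rw [ENNReal.tsum_mul_left, measure_biUnion hu hu_disj' fun _ _ => measurableSet_ball]
    _ ≤ ↑(D ^ 4) * μ H := by
        gcongr
        exact iUnion₂_subset fun b hb => hqH b (huA hb)

theorem measure_annulus_half_le (hμ : IsBallDoubling μ D) (x : E) {r h : ℝ} (hh : 0 < h)
    (hhr : h ≤ r) :
    μ (ball x r \ ball x (r - h / 2)) ≤ annulusDecayRate D * μ (ball x r \ ball x (r - h)) := by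
  have hsplit : ball x r \ ball x (r - h) =
      (ball x r \ ball x (r - h / 2)) ∪ (ball x (r - h / 2) \ ball x (r - h)) :=
    (sdiff_union_sdiff_cancel (ball_subset_ball (by linarith))
      (ball_subset_ball (by linarith))).symm
  rw [hsplit, measure_union (disjoint_sdiff_left.mono_right sdiff_subset)
    (measurableSet_ball.diff measurableSet_ball)]
  exact ENNReal.le_coe_div_add_one_mul_add (hμ.measure_outer_annulus_le x hh hhr)

theorem measure_annulus_le_pow (hμ : IsBallDoubling μ D) (x : E) {r : ℝ} (hr : 0 < r) (m : ℕ) :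
    μ (ball x r \ ball x (r - 2⁻¹ ^ m * r)) ≤ annulusDecayRate D ^ m * μ (ball x r) := by
  induction m with
  | zero => simp
  | succ m ih =>
    have hstep := hμ.measure_annulus_half_le x (h := 2⁻¹ ^ m * r) (by positivity)
      (mul_le_of_le_one_left hr.le (pow_le_one₀ (by norm_num) (by norm_num)))
    calc μ (ball x r \ ball x (r - 2⁻¹ ^ (m + 1) * r))
        = μ (ball x r \ ball x (r - 2⁻¹ ^ m * r / 2)) := by ring_nf
      _ ≤ annulusDecayRate D * (annulusDecayRate D ^ m * μ (ball x r)) :=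
        hstep.trans (by gcongr)
      _ = annulusDecayRate D ^ (m + 1) * μ (ball x r) := by ring

theorem measure_ball_one_add_le (hμ : IsBallDoubling μ D) (m : ℕ) (x : E) {s : ℝ} (hs : 0 < s) :
    μ (ball x ((1 + 2⁻¹ ^ m) * s)) ≤ ↑(1 + D * annulusDecayRate D ^ m) * μ (ball x s) := by
  set R := (1 + 2⁻¹ ^ m) * s
  have hm0 : (0 : ℝ) ≤ 2⁻¹ ^ m := by positivity
  have hm1 : (2⁻¹ : ℝ) ^ m ≤ 1 := pow_le_one₀ (by norm_num) (by norm_num)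
  have hR : R - 2⁻¹ ^ m * R ≤ s := by
    simp only [R]; nlinarith [mul_nonneg (mul_nonneg hm0 hm0) hs.le]
  calc μ (ball x R)
      ≤ μ (ball x (R - 2⁻¹ ^ m * R)) + μ (ball x R \ ball x (R - 2⁻¹ ^ m * R)) :=
        (measure_mono (sdiff_subset_iff.1 subset_rfl)).trans (measure_union_le _ _)
    _ ≤ μ (ball x s) + annulusDecayRate D ^ m * μ (ball x (2 * s)) := by
        gcongr
        exact (hμ.measure_annulus_le_pow x (by positivity) m).trans
            (by gcongr; simp only [R]; nlinarith)
    _ ≤ μ (ball x s) + annulusDecayRate D ^ m * (D * μ (ball x s)) := by gcongr; exact hμ x s hs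
    _ = ↑(1 + D * annulusDecayRate D ^ m) * μ (ball x s) := by push_cast; ring

end IsBallDoubling

theorem withDensity_ofReal_ball {X : Type*} [PseudoMetricSpace X] [ProperSpace X]
    [MeasurableSpace X] [OpensMeasurableSpace X] {μ : Measure X} {w : X → ℝ}
    (hw : LocallyIntegrable w μ) (hw0 : 0 ≤ w) (x : X) (s : ℝ) :
    μ.withDensity (fun y => ENNReal.ofReal (w y)) (ball x s) =
      ENNReal.ofReal (∫ y in ball x s, w y ∂μ) := by
  rw [withDensity_apply _ measurableSet_ball, ofReal_integral_eq_lintegral_ofReal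
    ((hw.integrableOn_isCompact (isCompact_closedBall x s)).mono_set ball_subset_closedBall)
    (ae_of_all _ hw0)]

namespace DoublingWeight

variable {n : ℕ} {C : ℝ} {w : EuclideanSpace ℝ (Fin n) → ℝ}

theorem isBallDoubling (hw : DoublingWeight n C w) :
    IsBallDoubling (volume.withDensity fun y => ENNReal.ofReal (w y)) C.toNNReal := by
  intro x s hs
  rw [withDensity_ofReal_ball hw.2.1 hw.1, withDensity_ofReal_ball hw.2.1 hw.1]
  exact (ENNReal.ofReal_le_ofReal (hw.2.2.2 x s hs)).trans_eq
    (ENNReal.ofReal_mul' (setIntegral_nonneg measurableSet_ball fun y _ => hw.1 y))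

theorem integral_ball_one_add_le (hw : DoublingWeight n C w) (m : ℕ) (x : EuclideanSpace ℝ (Fin n))
    {s : ℝ} (hs : 0 < s) :
    ∫ y in ball x ((1 + 2⁻¹ ^ m) * s), w y ≤
      (1 + C.toNNReal * annulusDecayRate C.toNNReal ^ m) * ∫ y in ball x s, w y := by
  have h := hw.isBallDoubling.measure_ball_one_add_le m x hs
  rw [withDensity_ofReal_ball hw.2.1 hw.1, withDensity_ofReal_ball hw.2.1 hw.1,
    ← ENNReal.ofReal_coe_nnreal, ← ENNReal.ofReal_mul (by positivity),
    ENNReal.ofReal_le_ofReal_iff (mul_nonneg (by positivity)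
      (setIntegral_nonneg measurableSet_ball fun y _ => hw.1 y))] at h
  simpa using h

end DoublingWeight

theorem setIntegral_le_integral_mul_and_integral_mul_le {X : Type*} [MeasurableSpace X]
    {μ : Measure X} {s t : Set X} {g w : X → ℝ} (hs : MeasurableSet s) (ht : MeasurableSet t)
    (hw0 : 0 ≤ w) (hwt : IntegrableOn w t μ) (hg : AEStronglyMeasurable g μ)
    (hsg : s.indicator 1 ≤ g) (hgt : g ≤ t.indicator 1) :
    ∫ x in s, w x ∂μ ≤ ∫ x, g x * w x ∂μ ∧ ∫ x, g x * w x ∂μ ≤ ∫ x in t, w x ∂μ := by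
  have hg0 : 0 ≤ g := fun x => (indicator_nonneg (fun _ _ => zero_le_one) x).trans (hsg x)
  have hind : ∀ (u : Set X) x, u.indicator w x = u.indicator 1 x * w x := fun u x => by
    by_cases hx : x ∈ u <;> simp [hx]
  have hgw : ∀ x, g x * w x = g x * t.indicator w x := fun x => by
    by_cases hx : x ∈ t
    · simp [hx]
    · simp [le_antisymm (by simpa [hx] using hgt x) (hg0 x)]
  have hwt' : Integrable (t.indicator w) μ := (integrable_indicator_iff ht).2 hwt
  have hgw_int : Integrable (fun x => g x * w x) μ := by
    simp_rw [hgw]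
    refine hwt'.bdd_mul (c := 1) hg (ae_of_all _ fun x => ?_)
    rw [Real.norm_of_nonneg (hg0 x)]
    exact (hgt x).trans (indicator_le_self' (fun _ _ => zero_le_one) x)
  rw [← integral_indicator hs, ← integral_indicator ht]
  refine ⟨integral_mono_of_nonneg (ae_of_all _ (indicator_nonneg fun x _ => hw0 x)) hgw_int
      (ae_of_all _ fun x => ?_),
    integral_mono_of_nonneg (ae_of_all _ fun x => mul_nonneg (hg0 x) (hw0 x)) hwt'
      (ae_of_all _ fun x => ?_)⟩
  · rw [hind]; exact mul_le_mul_of_nonneg_right (hsg x) (hw0 x)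
  · rw [hind]; exact mul_le_mul_of_nonneg_right (hgt x) (hw0 x)

section Rescaling

variable {E : Type*} [NormedAddCommGroup E] [NormedSpace ℝ E]

theorem inv_smul_sub_mem_ball_zero_iff {x z : E} {r ρ : ℝ} (hr : 0 < r) :
    r⁻¹ • (x - z) ∈ ball (0 : E) ρ ↔ z ∈ ball x (ρ * r) := by
  rw [mem_ball_zero_iff, norm_smul, Real.norm_of_nonneg (inv_nonneg.2 hr.le), norm_sub_rev,
    inv_mul_lt_iff₀ hr, mul_comm, mem_ball, dist_eq_norm]

theorem indicator_ball_le_rescale_and_rescale_le {f : E → ℝ} {ρ r : ℝ} (hr : 0 < r)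
    (hf0 : 0 ≤ f) (hf1 : f ≤ 1) (hf_one : ∀ y ∈ ball (0 : E) 1, f y = 1)
    (hf_supp : Function.support f ⊆ ball 0 ρ) (x : E) :
    (ball x r).indicator 1 ≤ (fun z => f (r⁻¹ • (x - z))) ∧
      (fun z => f (r⁻¹ • (x - z))) ≤ (ball x (ρ * r)).indicator 1 := by
  refine ⟨fun z => ?_, fun z => ?_⟩
  · by_cases hz : z ∈ ball x r
    · rw [indicator_of_mem hz]
      exact (hf_one _ ((inv_smul_sub_mem_ball_zero_iff hr).2 (by simpa))).ge
    · rw [indicator_of_notMem hz]; exact hf0 _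
  · by_cases hz : z ∈ ball x (ρ * r)
    · rw [indicator_of_mem hz]; exact hf1 _
    · rw [indicator_of_notMem hz]
      exact (Function.notMem_support.1 fun h => hz ((inv_smul_sub_mem_ball_zero_iff hr).1
        (hf_supp h))).le

end Rescaling

theorem smooth_vs_rough_average (C ε : ℝ) (hε : 0 < ε) :
    ∃ η > (0:ℝ), ∀ (n : ℕ) (w f : EuclideanSpace ℝ (Fin n) → ℝ),
      DoublingWeight n C w →
      Continuous f → (∀ x, 0 ≤ f x) →
      (∀ a b : EuclideanSpace ℝ (Fin n), ‖a‖ ≤ ‖b‖ → f b ≤ f a) →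
      (Function.support f ⊆ Metric.ball 0 (1+η)) →
      (∀ x ∈ Metric.ball (0 : EuclideanSpace ℝ (Fin n)) 1, f x = 1) →
      ∀ (x : EuclideanSpace ℝ (Fin n)) (r : ℝ), 0 < r →
        (r^n)⁻¹ * (∫ y in Metric.ball x r, w y) ≤ (∫ z, (r^n)⁻¹ * f (r⁻¹ • (x - z)) * w z) ∧
        (∫ z, (r^n)⁻¹ * f (r⁻¹ • (x - z)) * w z)
          ≤ (1+ε) * ((r^n)⁻¹ * ∫ y in Metric.ball x r, w y) := by
  set D := C.toNNReal
  obtain ⟨m, hm⟩ : ∃ m : ℕ, (D * annulusDecayRate D ^ m : ℝ) < ε :=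
    (((tendsto_pow_atTop_nhds_zero_of_lt_one (NNReal.coe_nonneg _)
      (annulusDecayRate_lt_one D)).const_mul (D : ℝ)).eventually
        (gt_mem_nhds (by simpa using hε))).exists
  refine ⟨2⁻¹ ^ m, by positivity, fun n w f hw hfc hf0 hf_anti hf_supp hf_one x r hr => ?_⟩
  have hf1 : ∀ y, f y ≤ 1 := fun y => (hf_anti 0 y (by simp)).trans_eq (hf_one 0 (by simp))
  obtain ⟨hlow, hup⟩ := indicator_ball_le_rescale_and_rescale_le hr hf0 hf1 hf_one hf_supp x
  obtain ⟨hI_low, hI_up⟩ := setIntegral_le_integral_mul_and_integral_mul_le measurableSet_ball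
    measurableSet_ball hw.1 ((hw.2.1.integrableOn_isCompact (isCompact_closedBall _ _)).mono_set
      ball_subset_closedBall) (hfc.comp (by fun_prop)).aestronglyMeasurable hlow hup
  have hI := hw.integral_ball_one_add_le m x hr
  simp_rw [mul_assoc, integral_const_mul]
  refine ⟨by gcongr; exact hI_low, ?_⟩
  calc (r ^ n)⁻¹ * ∫ z, f (r⁻¹ • (x - z)) * w z
      ≤ (r ^ n)⁻¹ * ((1 + D * annulusDecayRate D ^ m) * ∫ y in ball x r, w y) := by
        gcongr; exact hI_up.trans hI
    _ ≤ (r ^ n)⁻¹ * ((1 + ε) * ∫ y in ball x r, w y) := by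
        gcongr
        exact setIntegral_nonneg measurableSet_ball fun y _ => hw.1 y
    _ = (1 + ε) * ((r ^ n)⁻¹ * ∫ y in ball x r, w y) := by ring
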